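/- arXiv:1409.7606 — 2 statements merged into one kernel-verified Lean document; each statement's English description precedes it below -/
import Mathlib

section
/- Under the setup, curvature-one condition, and eigenvalue condition described in the context, assume in addition that R satisfies the first Bianchi identity, that μ1 ≤ μ2, and that λ1 ≤ λ2 in case μ1 = μ2. Fix unit vectors e1 ∈ σ1 and e2 ∈ σ2, set ē_i = Ae_i/μ_i and γ = R(e2, e1, ē1, ē2). Then λ1 ≤ 3γ + 1 ≤ λ2, and if equality holds in either inequality then λ1 = λ2 = 3γ + 1 and μ1 = μ2. -/
/-!
Work in the orthonormal frame `e₁, f₁, e₂, f₂` (`fᵢ = ēᵢ`) of `W = σ₁ ⊕ σ₂`, on which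
`A eᵢ = μᵢ fᵢ` and `A fᵢ = -μᵢ eᵢ`. The curvature-one condition at `v = e₁ + e₂`, tested on
`w = μ₂ f₁ - μ₁ f₂ ⟂ v, A v` and `u = f₁`, gives `μ₂ (λ₁ - 1) = μ₁ (x + y)` with
`x = R(f₁,e₁,e₂,f₂)` and `y = R(f₁,e₂,e₁,f₂)`. The same identity for the frame with the two
planes swapped, and for the frame with `(e₂, f₂)` turned into `(f₂, -e₂)`, gives
`μ₁ (λ₂ - 1) = μ₂ (x + y)` and `μ₂ (λ₁ - 1) = μ₁ (γ + x)`; the Bianchi identity says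
`x = γ + y`. Hence `y = γ`, `x = 2γ`, so `μ₂ (λ₁ - 1) = 3γ μ₁` and `μ₁ (λ₂ - 1) = 3γ μ₂`.
As `λ₁ > 1`, `γ > 0`, and `μ₁ ≤ μ₂` yields both inequalities, each an equality iff `μ₁ = μ₂`.
-/

open scoped RealInnerProductSpace

theorem bounds_of_mul_sub_one_eq {μ₁ μ₂ l₁ l₂ c : ℝ} (hμ₁ : 0 < μ₁) (hμ : μ₁ ≤ μ₂)
    (hl₁ : 1 < l₁) (h₁ : μ₂ * (l₁ - 1) = μ₁ * c) (h₂ : μ₁ * (l₂ - 1) = μ₂ * c) :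
    (l₁ ≤ c + 1 ∧ c + 1 ≤ l₂) ∧
      ((l₁ = c + 1 ∨ c + 1 = l₂) → l₁ = c + 1 ∧ l₂ = c + 1 ∧ μ₁ = μ₂) := by
  have hμ₂ : 0 < μ₂ := hμ₁.trans_le hμ
  have hc : 0 < c := pos_of_mul_pos_right (h₁ ▸ mul_pos hμ₂ (sub_pos.mpr hl₁)) hμ₁.le
  have hle : μ₁ * c ≤ μ₂ * c := mul_le_mul_of_nonneg_right hμ hc.le
  have of_eq : μ₁ = μ₂ → l₁ = c + 1 ∧ l₂ = c + 1 ∧ μ₁ = μ₂ := by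
    rintro rfl
    exact ⟨by linarith [mul_left_cancel₀ hμ₁.ne' h₁], by linarith [mul_left_cancel₀ hμ₁.ne' h₂],
      rfl⟩
  refine ⟨⟨?_, ?_⟩, fun h ↦ of_eq ?_⟩
  · nlinarith
  · nlinarith
  · refine mul_right_cancel₀ hc.ne' ?_
    rcases h with h | h
    · rw [← h₁, h]; ring
    · rw [← h₂, ← h]; ring

section

variable {V : Type*} [NormedAddCommGroup V] [InnerProductSpace ℝ V]

theorem orthonormal_vecFour_iff {a b c d : V} :
    Orthonormal ℝ ![a, b, c, d] ↔
      (⟪a, a⟫ = 1 ∧ ⟪a, b⟫ = 0 ∧ ⟪a, c⟫ = 0 ∧ ⟪a, d⟫ = 0) ∧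
      (⟪b, a⟫ = 0 ∧ ⟪b, b⟫ = 1 ∧ ⟪b, c⟫ = 0 ∧ ⟪b, d⟫ = 0) ∧
      (⟪c, a⟫ = 0 ∧ ⟪c, b⟫ = 0 ∧ ⟪c, c⟫ = 1 ∧ ⟪c, d⟫ = 0) ∧
      (⟪d, a⟫ = 0 ∧ ⟪d, b⟫ = 0 ∧ ⟪d, c⟫ = 0 ∧ ⟪d, d⟫ = 1) := by
  simp only [orthonormal_iff_ite, Fin.forall_fin_succ, Fin.isValue, Matrix.cons_val_zero,
    Matrix.cons_val_succ, Fin.succ_zero_eq_one, Fin.succ_one_eq_two, Matrix.cons_val_fin_one,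
    Fin.reduceSucc, IsEmpty.forall_iff, and_true, ↓reduceIte, Fin.reduceEq, Fin.succ_ne_zero]

section Skew

variable {A : V →ₗ[ℝ] V}

theorem inner_apply_self_eq_zero_of_skew (hA : ∀ x y, ⟪A x, y⟫ = -⟪x, A y⟫) (x : V) :
    ⟪x, A x⟫ = 0 := by
  have h := hA x x
  rw [real_inner_comm] at h
  linarith

theorem apply_apply_eq_neg_sq_smul_of_skew (hA : ∀ x y, ⟪A x, y⟫ = -⟪x, A y⟫) {x : V} {μ : ℝ}
    (hx : ‖A x‖ = μ * ‖x‖) (hAx : ‖A (A x)‖ = μ * ‖A x‖) : A (A x) = -(μ ^ 2 • x) := by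
  have hcross : ⟪A (A x), x⟫ = -(μ ^ 2 * ‖x‖ ^ 2) := by
    rw [hA, real_inner_self_eq_norm_sq, hx]; ring
  have hzero : ‖A (A x) + μ ^ 2 • x‖ ^ 2 = 0 := by
    rw [norm_add_sq_real, real_inner_smul_right, hcross, norm_smul, hAx, hx, Real.norm_eq_abs,
      abs_of_nonneg (sq_nonneg μ)]
    ring
  rw [eq_neg_iff_add_eq_zero]
  exact norm_eq_zero.mp (pow_eq_zero_iff two_ne_zero |>.mp hzero)

theorem rotation_partner_of_skew (hA : ∀ x y, ⟪A x, y⟫ = -⟪x, A y⟫) {σ : Submodule ℝ V}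
    (hAσ : σ.map A ≤ σ) {μ : ℝ} (hμ : 0 < μ) (hAμ : ∀ x ∈ σ, ‖A x‖ = μ * ‖x‖) {e f : V}
    (he : e ∈ σ) (heu : ‖e‖ = 1) (hf : f = μ⁻¹ • A e) :
    f ∈ σ ∧ ‖f‖ = 1 ∧ ⟪e, f⟫ = 0 ∧ A e = μ • f ∧ A f = -(μ • e) := by
  have hAe : A e ∈ σ := hAσ (Submodule.mem_map_of_mem he)
  have hAAe := apply_apply_eq_neg_sq_smul_of_skew hA (hAμ e he) (hAμ _ hAe)
  subst hf
  refine ⟨σ.smul_mem _ hAe, ?_, ?_, ?_, ?_⟩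
  · rw [norm_smul, hAμ e he, heu, norm_inv, Real.norm_of_nonneg hμ.le, mul_one,
      inv_mul_cancel₀ hμ.ne']
  · rw [real_inner_smul_right, inner_apply_self_eq_zero_of_skew hA, mul_zero]
  · rw [smul_inv_smul₀ hμ.ne']
  · rw [map_smul, hAAe, smul_neg, smul_smul, sq, inv_mul_cancel_left₀ hμ.ne']

end Skew

structure IsCurvatureTensor (R : V →ₗ[ℝ] V →ₗ[ℝ] V →ₗ[ℝ] V →ₗ[ℝ] ℝ) : Prop where
  antisymm : ∀ X Y Z W, R X Y Z W = -R Y X Z W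
  pair_symm : ∀ X Y Z W, R X Y Z W = R Z W X Y

namespace IsCurvatureTensor

variable {R : V →ₗ[ℝ] V →ₗ[ℝ] V →ₗ[ℝ] V →ₗ[ℝ] ℝ}

theorem antisymm_right (hR : IsCurvatureTensor R) (X Y Z W : V) : R X Y Z W = -R X Y W Z := by
  rw [hR.pair_symm, hR.antisymm, hR.pair_symm]

theorem swap_swap (hR : IsCurvatureTensor R) (X Y Z W : V) : R X Y Z W = R Y X W Z := by
  rw [hR.antisymm, hR.antisymm_right, neg_neg]

theorem jacobi_symm (hR : IsCurvatureTensor R) (X v Y : V) : R X v v Y = R Y v v X := by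
  rw [hR.pair_symm, hR.swap_swap]

theorem apply_eq_of_smul (hR : IsCurvatureTensor R) {e f : V} {μ l : ℝ} (hμ : μ ≠ 0)
    (h : R e (μ • f) (μ • f) e = l * μ ^ 2) : R f e e f = l := by
  simp only [map_smul, LinearMap.smul_apply, smul_eq_mul] at h
  rw [hR.swap_swap]
  exact mul_right_cancel₀ (pow_ne_zero 2 hμ) (by linear_combination h)

end IsCurvatureTensor

def IsCurvatureOneOn (R : V →ₗ[ℝ] V →ₗ[ℝ] V →ₗ[ℝ] V →ₗ[ℝ] ℝ) (A : V →ₗ[ℝ] V)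
    (W : Submodule ℝ V) : Prop :=
  ∀ v ∈ W, ‖v‖ = 1 → ∀ w ∈ W, ⟪w, v⟫ = 0 → ⟪w, A v⟫ = 0 → ∀ u ∈ W, R w v v u = ⟪w, u⟫

theorem IsCurvatureOneOn.apply {R : V →ₗ[ℝ] V →ₗ[ℝ] V →ₗ[ℝ] V →ₗ[ℝ] ℝ} {A : V →ₗ[ℝ] V}
    {W : Submodule ℝ V} (hc : IsCurvatureOneOn R A W) {v w u : V} (hv : v ∈ W) (hw : w ∈ W)
    (hu : u ∈ W) (hwv : ⟪w, v⟫ = 0) (hwAv : ⟪w, A v⟫ = 0) :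
    R w v v u = ⟪v, v⟫ * ⟪w, u⟫ := by
  rcases eq_or_ne v 0 with rfl | hv0
  · simp
  have h := hc (‖v‖⁻¹ • v) (W.smul_mem _ hv) (norm_smul_inv_norm hv0) w hw
    (by rw [real_inner_smul_right, hwv, mul_zero])
    (by rw [map_smul, real_inner_smul_right, hwAv, mul_zero]) u hu
  simp only [map_smul, LinearMap.smul_apply, smul_eq_mul] at h
  rw [← h, real_inner_self_eq_norm_sq]
  field_simp

structure IsAdaptedFrame (A : V →ₗ[ℝ] V) (W : Submodule ℝ V) (μ₁ μ₂ : ℝ) (e₁ f₁ e₂ f₂ : V) :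
    Prop where
  orthonormal : Orthonormal ℝ ![e₁, f₁, e₂, f₂]
  e₁_mem : e₁ ∈ W
  f₁_mem : f₁ ∈ W
  e₂_mem : e₂ ∈ W
  f₂_mem : f₂ ∈ W
  apply_e₁ : A e₁ = μ₁ • f₁
  apply_f₁ : A f₁ = -(μ₁ • e₁)
  apply_e₂ : A e₂ = μ₂ • f₂
  apply_f₂ : A f₂ = -(μ₂ • e₂)

namespace IsAdaptedFrame

variable {A : V →ₗ[ℝ] V} {W : Submodule ℝ V} {μ₁ μ₂ : ℝ} {e₁ f₁ e₂ f₂ : V}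

theorem swap (F : IsAdaptedFrame A W μ₁ μ₂ e₁ f₁ e₂ f₂) :
    IsAdaptedFrame A W μ₂ μ₁ e₂ f₂ e₁ f₁ where
  orthonormal := by
    have t := orthonormal_vecFour_iff.mp F.orthonormal
    exact orthonormal_vecFour_iff.mpr (by simp only [t, and_self])
  e₁_mem := F.e₂_mem
  f₁_mem := F.f₂_mem
  e₂_mem := F.e₁_mem
  f₂_mem := F.f₁_mem
  apply_e₁ := F.apply_e₂
  apply_f₁ := F.apply_f₂
  apply_e₂ := F.apply_e₁
  apply_f₂ := F.apply_f₁

theorem rotate (F : IsAdaptedFrame A W μ₁ μ₂ e₁ f₁ e₂ f₂) :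
    IsAdaptedFrame A W μ₁ μ₂ e₁ f₁ f₂ (-e₂) where
  orthonormal := by
    have t := orthonormal_vecFour_iff.mp F.orthonormal
    exact orthonormal_vecFour_iff.mpr (by
      simp only [t, inner_neg_right, inner_neg_left, neg_zero, neg_neg, and_self])
  e₁_mem := F.e₁_mem
  f₁_mem := F.f₁_mem
  e₂_mem := F.f₂_mem
  f₂_mem := W.neg_mem F.e₂_mem
  apply_e₁ := F.apply_e₁
  apply_f₁ := F.apply_f₁
  apply_e₂ := by rw [F.apply_f₂, smul_neg]
  apply_f₂ := by rw [map_neg, F.apply_e₂]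

variable {R : V →ₗ[ℝ] V →ₗ[ℝ] V →ₗ[ℝ] V →ₗ[ℝ] ℝ}

theorem diagonal_identity (hR : IsCurvatureTensor R) (hc : IsCurvatureOneOn R A W)
    (F : IsAdaptedFrame A W μ₁ μ₂ e₁ f₁ e₂ f₂) :
    μ₂ * (R f₁ e₁ e₁ f₁ - 1) = μ₁ * (R f₁ e₁ e₂ f₂ + R f₁ e₂ e₁ f₂) := by
  have t := orthonormal_vecFour_iff.mp F.orthonormal
  have hAv : A (e₁ + e₂) = μ₁ • f₁ + μ₂ • f₂ := by rw [map_add, F.apply_e₁, F.apply_e₂]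
  -- `w = μ₂ f₁ - μ₁ f₂`, written as a sum: `map_sub` does not fire in the first slot of `R`
  have h := hc.apply (v := e₁ + e₂) (w := μ₂ • f₁ + (-μ₁) • f₂) (W.add_mem F.e₁_mem F.e₂_mem)
    (W.add_mem (W.smul_mem _ F.f₁_mem) (W.smul_mem _ F.f₂_mem)) F.f₁_mem
    (by simp only [inner_add_left, inner_add_right, real_inner_smul_left, t]; ring)
    (by simp only [hAv, inner_add_left, inner_add_right, real_inner_smul_left,
          real_inner_smul_right, t]; ring)
  have c₁ : R f₁ e₂ e₂ f₁ = 1 := by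
    rw [hc.apply F.e₂_mem F.f₁_mem F.f₁_mem] <;>
      simp only [F.apply_e₂, real_inner_smul_right, t, mul_one, mul_zero]
  have c₂ : R e₂ f₁ f₁ e₁ = 0 := by
    rw [hc.apply F.f₁_mem F.e₂_mem F.e₁_mem] <;>
      simp only [F.apply_f₁, inner_neg_right, real_inner_smul_right, t, mul_zero, neg_zero]
  have c₃ : R f₂ e₁ e₁ f₁ = 0 := by
    rw [hc.apply F.e₁_mem F.f₂_mem F.f₁_mem] <;>
      simp only [F.apply_e₁, real_inner_smul_right, t, mul_zero]
  have c₄ : R f₁ e₂ e₂ f₂ = 0 := by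
    rw [hc.apply F.e₂_mem F.f₁_mem F.f₂_mem] <;>
      simp only [F.apply_e₂, real_inner_smul_right, t, mul_zero]
  simp only [map_add, map_smul, LinearMap.add_apply, LinearMap.smul_apply, smul_eq_mul,
    inner_add_left, inner_add_right, real_inner_smul_left, t] at h
  rw [hR.pair_symm f₁ e₁ e₂ f₁, hR.swap_swap f₁ e₂ e₁ f₁, c₂, c₁, c₃,
    hR.jacobi_symm f₂ e₂ f₁, c₄, hR.swap_swap f₂ e₁ e₂ f₁, hR.pair_symm e₁ f₂,
    hR.swap_swap f₂ e₂ e₁ f₁, hR.pair_symm e₂ f₂] at h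
  linear_combination h

theorem three_mul_curvature (hR : IsCurvatureTensor R)
    (hB : ∀ X Y Z W, R X Y Z W + R Y Z X W + R Z X Y W = 0) (hc : IsCurvatureOneOn R A W)
    (F : IsAdaptedFrame A W μ₁ μ₂ e₁ f₁ e₂ f₂) (hμ₁ : μ₁ ≠ 0) :
    μ₂ * (R f₁ e₁ e₁ f₁ - 1) = μ₁ * (3 * R e₂ e₁ f₁ f₂) ∧
      μ₁ * (R f₂ e₂ e₂ f₂ - 1) = μ₂ * (3 * R e₂ e₁ f₁ f₂) := by
  have E₁ := F.diagonal_identity hR hc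
  have E₂ := F.swap.diagonal_identity hR hc
  have E₃ := F.rotate.diagonal_identity hR hc
  rw [hR.swap_swap f₂ e₂ e₁ f₁, hR.pair_symm e₂ f₂, hR.swap_swap f₂ e₁ e₂ f₁,
    hR.pair_symm e₁ f₂] at E₂
  rw [map_neg, map_neg, ← hR.antisymm_right, hR.pair_symm f₁ f₂, ← hR.antisymm] at E₃
  have hbianchi := hB f₁ e₁ e₂ f₂
  rw [hR.antisymm e₁ e₂, hR.antisymm e₂ f₁] at hbianchi
  have hy : R f₁ e₂ e₁ f₂ = R e₂ e₁ f₁ f₂ :=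
    mul_left_cancel₀ hμ₁ (by linear_combination E₃ - E₁)
  constructor
  · linear_combination E₁ + μ₁ * hbianchi + 2 * μ₁ * hy
  · linear_combination E₂ + μ₂ * hbianchi + 2 * μ₂ * hy

end IsAdaptedFrame

theorem isAdaptedFrame_of_orthogonal_planes {A : V →ₗ[ℝ] V}
    (hA : ∀ x y, ⟪A x, y⟫ = -⟪x, A y⟫) {σ₁ σ₂ : Submodule ℝ V}
    (horth : ∀ x ∈ σ₁, ∀ y ∈ σ₂, ⟪x, y⟫ = 0) (hA₁ : σ₁.map A ≤ σ₁) (hA₂ : σ₂.map A ≤ σ₂)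
    {μ₁ μ₂ : ℝ} (hμ₁ : 0 < μ₁) (hμ₂ : 0 < μ₂) (hAμ₁ : ∀ x ∈ σ₁, ‖A x‖ = μ₁ * ‖x‖)
    (hAμ₂ : ∀ x ∈ σ₂, ‖A x‖ = μ₂ * ‖x‖) {e₁ f₁ e₂ f₂ : V} (he₁ : e₁ ∈ σ₁) (he₁u : ‖e₁‖ = 1)
    (he₂ : e₂ ∈ σ₂) (he₂u : ‖e₂‖ = 1) (hf₁ : f₁ = μ₁⁻¹ • A e₁) (hf₂ : f₂ = μ₂⁻¹ • A e₂) :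
    IsAdaptedFrame A (σ₁ ⊔ σ₂) μ₁ μ₂ e₁ f₁ e₂ f₂ := by
  obtain ⟨hf₁σ, hf₁u, he₁f₁, hAe₁, hAf₁⟩ :=
    rotation_partner_of_skew hA hA₁ hμ₁ hAμ₁ he₁ he₁u hf₁
  obtain ⟨hf₂σ, hf₂u, he₂f₂, hAe₂, hAf₂⟩ :=
    rotation_partner_of_skew hA hA₂ hμ₂ hAμ₂ he₂ he₂u hf₂
  have horth' : ∀ x ∈ σ₁, ∀ y ∈ σ₂, ⟪x, y⟫ = 0 ∧ ⟪y, x⟫ = 0 := fun x hx y hy ↦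
    ⟨horth x hx y hy, real_inner_comm x y ▸ horth x hx y hy⟩
  refine ⟨orthonormal_vecFour_iff.mpr ?_, Submodule.mem_sup_left he₁,
    Submodule.mem_sup_left hf₁σ, Submodule.mem_sup_right he₂, Submodule.mem_sup_right hf₂σ,
    hAe₁, hAf₁, hAe₂, hAf₂⟩
  simp only [real_inner_self_eq_norm_sq, he₁u, hf₁u, he₂u, hf₂u, one_pow, he₁f₁, he₂f₂,
    real_inner_comm e₁ f₁, real_inner_comm e₂ f₂, horth' _ he₁ _ he₂, horth' _ he₁ _ hf₂σ,
    horth' _ hf₁σ _ he₂, horth' _ hf₁σ _ hf₂σ, and_self]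

end

theorem stmt_10_general
    {V : Type*} [NormedAddCommGroup V] [InnerProductSpace ℝ V]
    (R : V →ₗ[ℝ] V →ₗ[ℝ] V →ₗ[ℝ] V →ₗ[ℝ] ℝ)
    (hskew : ∀ X Y Z W : V, R X Y Z W = - R Y X Z W)
    (hpair : ∀ X Y Z W : V, R X Y Z W = R Z W X Y)
    (hbianchi : ∀ X Y Z W : V, R X Y Z W + R Y Z X W + R Z X Y W = 0)
    (σ1 σ2 : Submodule ℝ V)
    (horth : ∀ x ∈ σ1, ∀ y ∈ σ2, ⟪x, y⟫ = 0)
    (A : V →ₗ[ℝ] V)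
    (hAskew : ∀ x y : V, ⟪A x, y⟫ = -⟪x, A y⟫)
    (hA1 : Submodule.map A σ1 = σ1) (hA2 : Submodule.map A σ2 = σ2)
    (μ1 μ2 : ℝ) (hμ1 : 0 < μ1) (hμ2 : 0 < μ2)
    (hAμ1 : ∀ x ∈ σ1, ‖A x‖ = μ1 * ‖x‖) (hAμ2 : ∀ x ∈ σ2, ‖A x‖ = μ2 * ‖x‖)
    (lam1 lam2 : ℝ)
    (hlam1 : ∀ x ∈ σ1, ‖x‖ = 1 → R x (A x) (A x) x = lam1 * μ1 ^ 2)
    (hlam2 : ∀ x ∈ σ2, ‖x‖ = 1 → R x (A x) (A x) x = lam2 * μ2 ^ 2)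
    (hcvc : ∀ v ∈ σ1 ⊔ σ2, ‖v‖ = 1 → ∀ w ∈ σ1 ⊔ σ2, ⟪w, v⟫ = 0 → ⟪w, A v⟫ = 0 →
      ∀ u ∈ σ1 ⊔ σ2, R w v v u = ⟪w, u⟫)
    (heigen : ∀ v ∈ σ1 ⊔ σ2, ‖v‖ = 1 →
      1 < R v (A v) (A v) v / ‖A v‖ ^ 2 ∧
      ∀ u ∈ σ1 ⊔ σ2, R (A v) v v u = (R v (A v) (A v) v / ‖A v‖ ^ 2) * ⟪A v, u⟫)
    (hμ : μ1 ≤ μ2)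
    (e1 : V) (he1 : e1 ∈ σ1) (he1u : ‖e1‖ = 1)
    (e2 : V) (he2 : e2 ∈ σ2) (he2u : ‖e2‖ = 1)
    (ebar1 ebar2 : V) (hebar1 : ebar1 = μ1⁻¹ • A e1) (hebar2 : ebar2 = μ2⁻¹ • A e2)
    (γ : ℝ) (hγ : γ = R e2 e1 ebar1 ebar2) :
    (lam1 ≤ 3 * γ + 1 ∧ 3 * γ + 1 ≤ lam2) ∧
      ((lam1 = 3 * γ + 1 ∨ 3 * γ + 1 = lam2) →
        lam1 = 3 * γ + 1 ∧ lam2 = 3 * γ + 1 ∧ μ1 = μ2) := by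
  have hR : IsCurvatureTensor R := ⟨hskew, hpair⟩
  have F := isAdaptedFrame_of_orthogonal_planes hAskew horth hA1.le hA2.le hμ1 hμ2 hAμ1 hAμ2
    he1 he1u he2 he2u hebar1 hebar2
  have hlam₁ : R ebar1 e1 e1 ebar1 = lam1 :=
    hR.apply_eq_of_smul hμ1.ne' (F.apply_e₁ ▸ hlam1 e1 he1 he1u)
  have hlam₂ : R ebar2 e2 e2 ebar2 = lam2 :=
    hR.apply_eq_of_smul hμ2.ne' (F.apply_e₂ ▸ hlam2 e2 he2 he2u)
  have hlam₁_gt : 1 < lam1 := by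
    have h := (heigen e1 (Submodule.mem_sup_left he1) he1u).1
    rwa [hlam1 e1 he1 he1u, hAμ1 e1 he1, he1u, mul_one,
      mul_div_cancel_right₀ _ (pow_ne_zero 2 hμ1.ne')] at h
  obtain ⟨h₁, h₂⟩ := F.three_mul_curvature hR hbianchi hcvc hμ1.ne'
  rw [hlam₁, ← hγ] at h₁
  rw [hlam₂, ← hγ] at h₂
  exact bounds_of_mul_sub_one_eq hμ1 hμ hlam₁_gt h₁ h₂

/-- In the two-invariant-planes setup with the curvature-one condition,
the eigenvalue condition, the first Bianchi identity, `μ1 ≤ μ2` and (`λ1 ≤ λ2` when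
`μ1 = μ2`): with `γ = R(e2,e1,ē1,ē2)` one has `λ1 ≤ 3γ + 1 ≤ λ2`, with equality in
either inequality only if `λ1 = λ2 = 3γ + 1` and `μ1 = μ2`. -/
theorem stmt_10
    {V : Type*} [NormedAddCommGroup V] [InnerProductSpace ℝ V] [FiniteDimensional ℝ V]
    (R : V →ₗ[ℝ] V →ₗ[ℝ] V →ₗ[ℝ] V →ₗ[ℝ] ℝ)
    (hskew : ∀ X Y Z W : V, R X Y Z W = - R Y X Z W)
    (hpair : ∀ X Y Z W : V, R X Y Z W = R Z W X Y)
    (hbianchi : ∀ X Y Z W : V, R X Y Z W + R Y Z X W + R Z X Y W = 0)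
    (σ1 σ2 : Submodule ℝ V)
    (hσ1 : Module.finrank ℝ σ1 = 2) (hσ2 : Module.finrank ℝ σ2 = 2)
    (horth : ∀ x ∈ σ1, ∀ y ∈ σ2, ⟪x, y⟫ = 0)
    (A : V →ₗ[ℝ] V)
    (hAskew : ∀ x y : V, ⟪A x, y⟫ = -⟪x, A y⟫)
    (hA1 : Submodule.map A σ1 = σ1) (hA2 : Submodule.map A σ2 = σ2)
    (μ1 μ2 : ℝ) (hμ1 : 0 < μ1) (hμ2 : 0 < μ2)
    (hAμ1 : ∀ x ∈ σ1, ‖A x‖ = μ1 * ‖x‖) (hAμ2 : ∀ x ∈ σ2, ‖A x‖ = μ2 * ‖x‖)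
    (lam1 lam2 : ℝ)
    (hlam1 : ∀ x ∈ σ1, ‖x‖ = 1 → R x (A x) (A x) x = lam1 * μ1 ^ 2)
    (hlam2 : ∀ x ∈ σ2, ‖x‖ = 1 → R x (A x) (A x) x = lam2 * μ2 ^ 2)
    (hcvc : ∀ v ∈ σ1 ⊔ σ2, ‖v‖ = 1 → ∀ w ∈ σ1 ⊔ σ2, ⟪w, v⟫ = 0 → ⟪w, A v⟫ = 0 →
      ∀ u ∈ σ1 ⊔ σ2, R w v v u = ⟪w, u⟫)
    (heigen : ∀ v ∈ σ1 ⊔ σ2, ‖v‖ = 1 →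
      1 < R v (A v) (A v) v / ‖A v‖ ^ 2 ∧
      ∀ u ∈ σ1 ⊔ σ2, R (A v) v v u = (R v (A v) (A v) v / ‖A v‖ ^ 2) * ⟪A v, u⟫)
    (hμ : μ1 ≤ μ2) (hord : μ1 = μ2 → lam1 ≤ lam2)
    (e1 : V) (he1 : e1 ∈ σ1) (he1u : ‖e1‖ = 1)
    (e2 : V) (he2 : e2 ∈ σ2) (he2u : ‖e2‖ = 1)
    (ebar1 ebar2 : V) (hebar1 : ebar1 = μ1⁻¹ • A e1) (hebar2 : ebar2 = μ2⁻¹ • A e2)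
    (γ : ℝ) (hγ : γ = R e2 e1 ebar1 ebar2) :
    (lam1 ≤ 3 * γ + 1 ∧ 3 * γ + 1 ≤ lam2) ∧
      ((lam1 = 3 * γ + 1 ∨ 3 * γ + 1 = lam2) →
        lam1 = 3 * γ + 1 ∧ lam2 = 3 * γ + 1 ∧ μ1 = μ2) :=
  stmt_10_general R hskew hpair hbianchi σ1 σ2 horth A hAskew hA1 hA2 μ1 μ2 hμ1 hμ2 hAμ1 hAμ2 lam1
    lam2 hlam1 hlam2 hcvc heigen hμ e1 he1 he1u e2 he2 he2u ebar1 ebar2 hebar1 hebar2 γ hγ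
end

section
/- Under the Kähler cvc(1) package described in the context, if dim V ≥ 4, then A∘J = J∘A. -/
/-!
Kähler symmetry gives `J E_v = E_{Jv}`, hence `span {Jv, AJv} = span {Jv, JAv}`, and since
`AJv ⊥ Jv` the vector `AJv` is a multiple of `JAv`. Pointwise proportional maps are
proportional, so `AJ = c JA`; as `A` and `J` are skew, taking adjoints gives `c = ±1`.
If `c = -1` then `Jv ⊥ Av`, so `Jv ∈ E_v` for every unit `v`, i.e. the holomorphic sectional
curvature is identically `1`. Polarizing this at orthonormal `x, y` with `y ⊥ Jx` gives
`1 = sec(x, y) + 3 sec(x, Jy) ≥ 4`.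
-/

open scoped RealInnerProductSpace

theorem exists_eq_smul_of_forall_mem_span_singleton {K W : Type*} [Field K] [AddCommGroup W]
    [Module K W] {T S : W →ₗ[K] W} (hS : Function.Bijective S) (h : ∀ v, T v ∈ K ∙ S v) :
    ∃ c : K, T = c • S := by
  let e := LinearEquiv.ofBijective S hS
  obtain ⟨c, hc⟩ := LinearMap.exists_eq_smul_id_of_forall_notLinearIndependent
    (f := e.symm.toLinearMap ∘ₗ T) fun v => by
      obtain ⟨a, ha⟩ := Submodule.mem_span_singleton.mp (h v)
      rw [LinearIndependent.pair_iff]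
      push Not
      refine ⟨a, -1, ?_, by simp⟩
      have : e.symm (T v) = a • v := by
        rw [← ha, e.symm_apply_eq, map_smul]; rfl
      simp [this]
  refine ⟨c, LinearMap.ext fun v => ?_⟩
  have := congr(e ($hc v))
  simpa [e] using this

section Kahler

variable {V : Type*} [AddCommGroup V] [Module ℝ V]

structure IsKahlerCurvatureTensor (J : V →ₗ[ℝ] V)
    (R : V →ₗ[ℝ] V →ₗ[ℝ] V →ₗ[ℝ] V →ₗ[ℝ] ℝ) : Prop where
  antisymm : ∀ X Y Z W, R X Y Z W = -R Y X Z W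
  pair_symm : ∀ X Y Z W, R X Y Z W = R Z W X Y
  bianchi : ∀ X Y Z W, R X Y Z W + R Y Z X W + R Z X Y W = 0
  map_map : ∀ X Y Z W, R (J X) (J Y) Z W = R X Y Z W

namespace IsKahlerCurvatureTensor

variable {J : V →ₗ[ℝ] V} {R : V →ₗ[ℝ] V →ₗ[ℝ] V →ₗ[ℝ] V →ₗ[ℝ] ℝ}

theorem apply_map_map_right (hR : IsKahlerCurvatureTensor J R) (a b c d : V) :
    R a b (J c) (J d) = R a b c d := by
  rw [hR.pair_symm, hR.map_map, hR.pair_symm]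

theorem map_apply_eq_neg_apply_map (hR : IsKahlerCurvatureTensor J R)
    (hJ2 : ∀ x, J (J x) = -x) (a b c d : V) : R (J a) b c d = -R a (J b) c d := by
  calc R (J a) b c d = R (J a) (J (-J b)) c d := by rw [map_neg, hJ2, neg_neg]
    _ = -R a (J b) c d := by
        simp only [hR.map_map, map_neg, LinearMap.neg_apply]

theorem apply_map_self_apply_map (hR : IsKahlerCurvatureTensor J R)
    (hJ2 : ∀ x, J (J x) = -x) (x y : V) :
    R (J x) x y (J y) = R y x x y + R (J y) x x (J y) := by
  linarith [hR.bianchi (J x) x y (J y), hR.apply_map_map_right x y x y, hR.antisymm x y x y,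
    hR.antisymm y (J x) x (J y), hR.map_apply_eq_neg_apply_map hJ2 x y x (J y),
    hR.antisymm x (J y) x (J y)]

end IsKahlerCurvatureTensor

end Kahler

section InnerProductSpace

variable {V : Type*} [NormedAddCommGroup V] [InnerProductSpace ℝ V]
  {J A : V →ₗ[ℝ] V} {R : V →ₗ[ℝ] V →ₗ[ℝ] V →ₗ[ℝ] V →ₗ[ℝ] ℝ}

theorem mem_orthogonal_span_pair_iff {a b w : V} :
    w ∈ (Submodule.span ℝ {a, b})ᗮ ↔ ⟪a, w⟫ = 0 ∧ ⟪b, w⟫ = 0 := by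
  rw [Submodule.span_insert, ← Submodule.inf_orthogonal, Submodule.mem_inf,
    Submodule.mem_orthogonal_singleton_iff_inner_right,
    Submodule.mem_orthogonal_singleton_iff_inner_right]

theorem exists_norm_eq_one_inner_eq_zero [FiniteDimensional ℝ V]
    (hV : 2 < Module.finrank ℝ V) (a b : V) :
    ∃ y : V, ‖y‖ = 1 ∧ ⟪a, y⟫ = 0 ∧ ⟪b, y⟫ = 0 := by
  set K := Submodule.span ℝ {a, b}
  have hK : Module.finrank ℝ K ≤ 2 := by
    classical
    exact (finrank_span_le_card ({a, b} : Set V)).trans (by simpa using Finset.card_le_two)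
  have hKperp : Kᗮ ≠ ⊥ := by
    intro h
    have := K.finrank_add_finrank_orthogonal
    rw [h, finrank_bot] at this
    omega
  obtain ⟨y, hy, hy0⟩ := Submodule.exists_mem_ne_zero_of_ne_bot hKperp
  exact ⟨‖y‖⁻¹ • y, norm_smul_inv_norm hy0,
    mem_orthogonal_span_pair_iff.mp (Kᗮ.smul_mem _ hy)⟩

theorem forall_mem_span_singleton_of_norm_eq_one {T S : V →ₗ[ℝ] V}
    (h : ∀ v, ‖v‖ = 1 → T v ∈ ℝ ∙ S v) (v : V) : T v ∈ ℝ ∙ S v := by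
  rcases eq_or_ne v 0 with rfl | hv
  · simp
  have hn : ‖v‖ ≠ 0 := norm_ne_zero_iff.mpr hv
  have := Submodule.smul_mem _ ‖v‖ (h (‖v‖⁻¹ • v) (norm_smul_inv_norm hv))
  rwa [map_smul, map_smul, smul_inv_smul₀ hn,
    Submodule.span_singleton_smul_eq (inv_ne_zero hn).isUnit] at this

theorem inner_map_self_eq_zero_of_skew {T : V →ₗ[ℝ] V} (hT : ∀ x y, ⟪T x, y⟫ = -⟪x, T y⟫)
    (x : V) : ⟪T x, x⟫ = 0 := by
  have := hT x x
  rw [real_inner_comm x] at this ⊢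
  linarith

theorem eq_one_or_eq_neg_one_of_comp_eq_smul_comp {S T : V →ₗ[ℝ] V}
    (hS : ∀ x y, ⟪S x, y⟫ = -⟪x, S y⟫) (hT : ∀ x y, ⟪T x, y⟫ = -⟪x, T y⟫) {c : ℝ}
    (h : T ∘ₗ S = c • (S ∘ₗ T)) (hne : T ∘ₗ S ≠ 0) : c = 1 ∨ c = -1 := by
  have adj : ∀ x y, ⟪S (T x), y⟫ = ⟪x, T (S y)⟫ := fun x y => by
    rw [hS, hT, neg_neg]
  have hTS : ∀ x, T (S x) = c • S (T x) := fun x => congr($h x)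
  obtain ⟨x, hx⟩ : ∃ x, T (S x) ≠ 0 := by
    by_contra! h0
    exact hne (LinearMap.ext h0)
  have key : ⟪T (S x), T (S x)⟫ = c * c * ⟪T (S x), T (S x)⟫ := calc
    ⟪T (S x), T (S x)⟫ = c * ⟪x, T (S (T (S x)))⟫ := by
        rw [hTS x, inner_smul_left, adj]; rfl
    _ = c * c * ⟪T (S x), T (S x)⟫ := by
        rw [hTS (T (S x)), inner_smul_right, real_inner_comm, adj]; ring
  exact mul_self_eq_one_iff.mp
    (mul_right_cancel₀ (inner_self_ne_zero.mpr hx) (by rw [one_mul]; exact key.symm))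

theorem inner_map_left_eq_neg_inner_map_right (hJiso : ∀ x y, ⟪J x, J y⟫ = ⟪x, y⟫)
    (hJ2 : ∀ x, J (J x) = -x) (x y : V) : ⟪J x, y⟫ = -⟪x, J y⟫ := by
  rw [← hJiso, hJ2, inner_neg_left]

theorem norm_map_eq_of_inner_map_map (hJiso : ∀ x y, ⟪J x, J y⟫ = ⟪x, y⟫) (x : V) :
    ‖J x‖ = ‖x‖ :=
  (J.isometryOfInner hJiso).norm_map x

theorem apply_map_self_self_eq_of_norm_eq_one
    (h : ∀ v : V, ‖v‖ = 1 → ∀ u, R (J v) v v u = ⟪J v, u⟫) (v u : V) :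
    R (J v) v v u = ⟪v, v⟫ * ⟪J v, u⟫ := by
  rcases eq_or_ne v 0 with rfl | hv
  · simp
  have hn : ‖v‖ ≠ 0 := norm_ne_zero_iff.mpr hv
  have := h (‖v‖⁻¹ • v) (norm_smul_inv_norm hv) u
  simp only [map_smul, LinearMap.smul_apply, smul_eq_mul, real_inner_smul_left] at this
  rw [real_inner_self_eq_norm_sq]
  field_simp at this
  linear_combination this

/-- The part of the cubic identity `hH` at `x + y` that is linear in `y`. -/
theorem apply_map_polarization (hH : ∀ v u : V, R (J v) v v u = ⟪v, v⟫ * ⟪J v, u⟫)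
    (x y u : V) :
    R (J y) x x u + R (J x) y x u + R (J x) x y u =
      ⟪x, x⟫ * ⟪J y, u⟫ + 2 * ⟪x, y⟫ * ⟪J x, u⟫ := by
  have hadd := hH (x + y) u
  have hsub := hH (x + (-1 : ℝ) • y) u
  have hy := hH y u
  simp only [map_add, map_smul, LinearMap.add_apply, LinearMap.smul_apply, smul_eq_mul,
    inner_add_left, inner_add_right, real_inner_smul_left, real_inner_smul_right,
    real_inner_comm x y] at hadd hsub
  linear_combination (hadd - hsub) / 2 - hy

/-- The paper's curvature-one Jacobi eigenspace `E_v`, as a set. -/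
def jacobiOneSet (R : V →ₗ[ℝ] V →ₗ[ℝ] V →ₗ[ℝ] V →ₗ[ℝ] ℝ) (v : V) : Set V :=
  {w | ⟪w, v⟫ = 0 ∧ ∀ u, R w v v u = ⟪w, u⟫}

theorem map_mem_jacobiOneSet_map (hJiso : ∀ x y, ⟪J x, J y⟫ = ⟪x, y⟫) (hJ2 : ∀ x, J (J x) = -x)
    (hR : IsKahlerCurvatureTensor J R) {v w : V} (hw : w ∈ jacobiOneSet R v) :
    J w ∈ jacobiOneSet R (J v) := by
  refine ⟨(hJiso w v).trans hw.1, fun u => ?_⟩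
  calc R (J w) (J v) (J v) u = R w v (J v) (J (-J u)) := by
        rw [hR.map_map, map_neg, hJ2, neg_neg]
    _ = ⟪J w, u⟫ := by
        rw [hR.apply_map_map_right, map_neg, hw.2,
          inner_map_left_eq_neg_inner_map_right hJiso hJ2]

theorem not_forall_map_self_mem_jacobiOneSet [FiniteDimensional ℝ V]
    (hV : 2 < Module.finrank ℝ V)
    (hJiso : ∀ x y, ⟪J x, J y⟫ = ⟪x, y⟫) (hJ2 : ∀ x, J (J x) = -x)
    (hR : IsKahlerCurvatureTensor J R)
    (hsec : ∀ x y : V, ‖x‖ = 1 → ‖y‖ = 1 → ⟪x, y⟫ = 0 → 1 ≤ R y x x y) :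
    ¬ ∀ v : V, ‖v‖ = 1 → J v ∈ jacobiOneSet R v := by
  intro h
  have : Nontrivial V := Module.nontrivial_of_finrank_pos (R := ℝ) (by omega)
  obtain ⟨x, hx⟩ := exists_norm_eq V zero_le_one
  obtain ⟨y, hy, hxy, hJxy⟩ := exists_norm_eq_one_inner_eq_zero hV x (J x)
  have hxJy : ⟪x, J y⟫ = 0 := by
    rw [← neg_eq_zero, ← inner_map_left_eq_neg_inner_map_right hJiso hJ2, hJxy]
  have hpol := apply_map_polarization
    (apply_map_self_self_eq_of_norm_eq_one fun v hv => (h v hv).2) x y (J y)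
  rw [hxy, hJiso, real_inner_self_eq_norm_sq, real_inner_self_eq_norm_sq, hx, hy] at hpol
  -- `hpol` now reads `1 = sec(x, y) + 3 sec(x, J y)`.
  have hsec₁ := hsec x y hx hy hxy
  have hsec₂ := hsec x (J y) hx ((norm_map_eq_of_inner_map_map hJiso y).trans hy) hxJy
  linarith [hR.apply_map_self_apply_map hJ2 x y, hR.map_apply_eq_neg_apply_map hJ2 x y x (J y),
    hR.antisymm x (J y) x (J y)]

theorem map_J_mem_span_J_map [FiniteDimensional ℝ V]
    (hJiso : ∀ x y, ⟪J x, J y⟫ = ⟪x, y⟫) (hJ2 : ∀ x, J (J x) = -x)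
    (hR : IsKahlerCurvatureTensor J R) (hA : ∀ x y, ⟪A x, y⟫ = -⟪x, A y⟫)
    (hE : ∀ v : V, ‖v‖ = 1 → ∀ w, w ∈ jacobiOneSet R v ↔ w ∈ (Submodule.span ℝ {v, A v})ᗮ)
    {v : V} (hv : ‖v‖ = 1) : A (J v) ∈ ℝ ∙ J (A v) := by
  have hJv : ‖J v‖ = 1 := (norm_map_eq_of_inner_map_map hJiso v).trans hv
  have hJskew := inner_map_left_eq_neg_inner_map_right hJiso hJ2
  have hperp : ∀ z, ⟪J v, z⟫ = 0 → ⟪J (A v), z⟫ = 0 → ⟪A (J v), z⟫ = 0 := by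
    intro z hvz hAvz
    have hz : -J z ∈ jacobiOneSet R v := (hE v hv _).mpr <| mem_orthogonal_span_pair_iff.mpr
      ⟨by rw [inner_neg_right, ← hJskew, hvz], by rw [inner_neg_right, ← hJskew, hAvz]⟩
    have hJz := map_mem_jacobiOneSet_map hJiso hJ2 hR hz
    rw [map_neg, hJ2, neg_neg] at hJz
    exact (mem_orthogonal_span_pair_iff.mp ((hE (J v) hJv z).mp hJz)).2
  have hmem : A (J v) ∈ Submodule.span ℝ {J v, J (A v)} := by
    rw [← Submodule.orthogonal_orthogonal (Submodule.span ℝ {J v, J (A v)})]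
    intro z hz
    rw [real_inner_comm]
    exact hperp z (mem_orthogonal_span_pair_iff.mp hz).1 (mem_orthogonal_span_pair_iff.mp hz).2
  obtain ⟨a, b, hab⟩ := Submodule.mem_span_pair.mp hmem
  have ha : a = 0 := by
    have := congr(⟪$hab, J v⟫)
    rw [inner_add_left, real_inner_smul_left, real_inner_smul_left,
      inner_map_self_eq_zero_of_skew hA, hJiso (A v), inner_map_self_eq_zero_of_skew hA,
      real_inner_self_eq_norm_sq, hJv] at this
    simpa using this
  exact Submodule.mem_span_singleton.mpr ⟨b, by simpa [ha] using hab⟩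

theorem map_self_mem_jacobiOneSet_of_anticomm
    (hJiso : ∀ x y, ⟪J x, J y⟫ = ⟪x, y⟫) (hJ2 : ∀ x, J (J x) = -x)
    (hA : ∀ x y, ⟪A x, y⟫ = -⟪x, A y⟫)
    (hE : ∀ v : V, ‖v‖ = 1 → ∀ w, w ∈ jacobiOneSet R v ↔ w ∈ (Submodule.span ℝ {v, A v})ᗮ)
    (hAJ : ∀ x, A (J x) = -J (A x)) {v : V} (hv : ‖v‖ = 1) : J v ∈ jacobiOneSet R v := by
  have hJskew := inner_map_left_eq_neg_inner_map_right hJiso hJ2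
  refine (hE v hv _).mpr (mem_orthogonal_span_pair_iff.mpr ⟨?_, ?_⟩)
  · rw [real_inner_comm]
    exact inner_map_self_eq_zero_of_skew hJskew v
  · have h := hA v (J v)
    rw [hAJ, inner_neg_right] at h
    linarith [hJskew (A v) v, real_inner_comm v (J (A v))]

end InnerProductSpace

/-- In the Kähler cvc(1) package with `dim V ≥ 4`, `A∘J = J∘A`. -/
theorem stmt_13
    {V : Type*} [NormedAddCommGroup V] [InnerProductSpace ℝ V] [FiniteDimensional ℝ V]
    (hdim : 4 ≤ Module.finrank ℝ V)
    (J : V →ₗ[ℝ] V)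
    (hJiso : ∀ x y : V, ⟪J x, J y⟫ = ⟪x, y⟫)
    (hJ2 : ∀ x : V, J (J x) = -x)
    (R : V →ₗ[ℝ] V →ₗ[ℝ] V →ₗ[ℝ] V →ₗ[ℝ] ℝ)
    (hskew : ∀ X Y Z W : V, R X Y Z W = - R Y X Z W)
    (hpair : ∀ X Y Z W : V, R X Y Z W = R Z W X Y)
    (hbianchi : ∀ X Y Z W : V, R X Y Z W + R Y Z X W + R Z X Y W = 0)
    (hkahler : ∀ X Y Z W : V, R (J X) (J Y) Z W = R X Y Z W)
    (hsec : ∀ x y : V, ‖x‖ = 1 → ‖y‖ = 1 → ⟪x, y⟫ = 0 → 1 ≤ R y x x y)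
    (A : V →ₗ[ℝ] V) (hAinv : Function.Bijective A)
    (hAskew : ∀ x y : V, ⟪A x, y⟫ = -⟪x, A y⟫)
    (hE : ∀ v : V, ‖v‖ = 1 → ∀ w : V,
      (⟪w, v⟫ = 0 ∧ ∀ u : V, R w v v u = ⟪w, u⟫) ↔
        w ∈ (Submodule.span ℝ {v, A v})ᗮ) :
    A ∘ₗ J = J ∘ₗ A := by
  have hR : IsKahlerCurvatureTensor J R := ⟨hskew, hpair, hbianchi, hkahler⟩
  have hJskew := inner_map_left_eq_neg_inner_map_right hJiso hJ2
  have hJbij : Function.Bijective J :=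
    Function.bijective_iff_has_inverse.mpr ⟨-J, fun x => by simp [hJ2], fun x => by simp [hJ2]⟩
  have : Nontrivial V := Module.nontrivial_of_finrank_pos (R := ℝ) (by omega)
  obtain ⟨c, hc⟩ := exists_eq_smul_of_forall_mem_span_singleton (T := A ∘ₗ J) (S := J ∘ₗ A)
    (hJbij.comp hAinv) (forall_mem_span_singleton_of_norm_eq_one fun v hv =>
      map_J_mem_span_J_map hJiso hJ2 hR hAskew hE hv)
  rcases eq_one_or_eq_neg_one_of_comp_eq_smul_comp hJskew hAskew hc
      (LinearMap.ne_zero_of_injective (hAinv.1.comp hJbij.1)) with rfl | rfl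
  · simpa using hc
  · refine absurd (fun v hv => map_self_mem_jacobiOneSet_of_anticomm hJiso hJ2 hAskew hE ?_ hv)
      (not_forall_map_self_mem_jacobiOneSet (by omega) hJiso hJ2 hR hsec)
    intro x
    simpa using congr($hc x)
end
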